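/- The function g(t) = (t+1)^c − 2·t^c − 1, where c = log₂ 3, is nonnegative for all t ∈ [0, 1]. -/

import Mathlib

/-! The increments `x ↦ φ (x + h) - φ x` of a convex function `φ` are nondecreasing. Applied to
`φ = x ^ c` (convex for `1 ≤ c`) with step `t ≤ 1`, comparing the increments at `t` and at `1` gives
`(2 ^ c - 1) t ^ c = (2t) ^ c - t ^ c ≤ (t + 1) ^ c - 1`, and `2 ^ c = 3` for `c = log₂ 3`. -/

open Real Set

theorem ConvexOn.map_add_sub_map_le {𝕜 : Type*} [Field 𝕜] [LinearOrder 𝕜] [IsStrictOrderedRing 𝕜]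
    {s : Set 𝕜} {f : 𝕜 → 𝕜} (hf : ConvexOn 𝕜 s f) {a b h : 𝕜} (ha : a ∈ s) (hbh : b + h ∈ s)
    (hab : a ≤ b) (hh : 0 ≤ h) : f (a + h) - f a ≤ f (b + h) - f b := by
  rcases (add_nonneg (sub_nonneg.2 hab) hh).eq_or_lt with hd | hd
  · obtain rfl : h = 0 := by linarith [sub_nonneg.2 hab]
    obtain rfl : a = b := by linarith
    rfl
  -- `a + h` and `b` are convex combinations of `a` and `b + h` with the same two weights, swapped.
  set d := b - a + h
  have hw₁ : 0 ≤ (b - a) / d := div_nonneg (sub_nonneg.2 hab) hd.le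
  have hw₂ : 0 ≤ h / d := div_nonneg hh hd.le
  have hsum : (b - a) / d + h / d = 1 := by field_simp; ring
  have hah := hf.2 ha hbh hw₁ hw₂ hsum
  have hb := hf.2 ha hbh hw₂ hw₁ (by rw [add_comm, hsum])
  simp only [smul_eq_mul] at hah hb
  have hah_eq : (b - a) / d * a + h / d * (b + h) = a + h := by field_simp; ring
  have hb_eq : h / d * a + (b - a) / d * (b + h) = b := by field_simp; ring
  rw [hah_eq] at hah
  rw [hb_eq] at hb
  linear_combination hah + hb + (f a + f (b + h)) * hsum

theorem one_add_mul_rpow_le_add_one_rpow {c t : ℝ} (hc : 1 ≤ c) (ht₀ : 0 ≤ t) (ht₁ : t ≤ 1) :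
    1 + (2 ^ c - 1) * t ^ c ≤ (t + 1) ^ c := by
  have := (convexOn_rpow hc).map_add_sub_map_le (mem_Ici.2 ht₀) (mem_Ici.2 (by linarith)) ht₁ ht₀
  rw [← two_mul, mul_rpow zero_le_two ht₀, one_rpow, add_comm 1 t] at this
  linarith

theorem stmt1 (t : ℝ) (ht : t ∈ Set.Icc (0:ℝ) 1) :
    0 ≤ (t + 1) ^ Real.logb 2 3 - 2 * t ^ Real.logb 2 3 - 1 := by
  have hc : 1 ≤ logb 2 3 := by
    rw [le_logb_iff_rpow_le one_lt_two three_pos, rpow_one]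
    norm_num
  have := one_add_mul_rpow_le_add_one_rpow hc ht.1 ht.2
  rw [rpow_logb two_pos (by norm_num) three_pos] at this
  linarith
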